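/- Let g : ℂ* → ℂ and h : ℂ* → ℂ be holomorphic, suppose z·g(z) and h(z) extend holomorphically over z = 0, and suppose g(z) = −conj(h(−1/conj(z))) for all z ∈ ℂ*. Then there exist constants g₀, g₋₁ ∈ ℂ with g(z) = g₀ + g₋₁·z⁻¹ for all z ∈ ℂ*, and correspondingly h(z) = −conj(g₀) + conj(g₋₁)·z. -/
import Mathlib


open Complex Filter Set Topology

/-- Laurent-series symmetry step of Theorem 3: if `g, h` are holomorphic on `ℂ*`,
`z·g(z)` and `h(z)` extend holomorphically over `0`, and
`g(z) = −conj(h(−1/conj z))`, then `g(z) = g₀ + g₋₁·z⁻¹` and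
`h(z) = −conj(g₀) + conj(g₋₁)·z`. -/
theorem stmt13 (g h : ℂ → ℂ)
    (hg : DifferentiableOn ℂ g {z : ℂ | z ≠ 0})
    (hh : DifferentiableOn ℂ h {z : ℂ | z ≠ 0})
    (hG : ∃ G : ℂ → ℂ, Differentiable ℂ G ∧ ∀ z : ℂ, z ≠ 0 → G z = z * g z)
    (hH : ∃ H : ℂ → ℂ, Differentiable ℂ H ∧ ∀ z : ℂ, z ≠ 0 → H z = h z)
    (hsym : ∀ z : ℂ, z ≠ 0 →
      g z = -(starRingEnd ℂ) (h (-1 / (starRingEnd ℂ) z))) :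
    ∃ g₀ gm : ℂ,
      (∀ z : ℂ, z ≠ 0 → g z = g₀ + gm * z⁻¹) ∧
      (∀ z : ℂ, z ≠ 0 →
        h z = -(starRingEnd ℂ) g₀ + (starRingEnd ℂ) gm * z) := by
  obtain ⟨G, hGd, hGe⟩ := hG
  obtain ⟨H, hHd, hHe⟩ := hH
  set F := dslope G 0 with hF
  have hFd : Differentiable ℂ F := by
    rw [← differentiableOn_univ]
    exact (Complex.differentiableOn_dslope (univ_mem)).mpr hGd.differentiableOn
  have key : ∀ z : ℂ, z ≠ 0 → F z = g z - G 0 * z⁻¹ := by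
    intro z hz
    rw [hF, dslope_of_ne _ hz, slope_def_field, hGe z hz]
    field_simp
    ring
  -- the inversion map tends to 0 at cocompact
  have hinv : Tendsto (fun z : ℂ => -1 / (starRingEnd ℂ) z) (cocompact ℂ) (𝓝 0) := by
    rw [tendsto_zero_iff_norm_tendsto_zero]
    have : Tendsto (fun z : ℂ => ‖z‖⁻¹) (cocompact ℂ) (𝓝 0) :=
      tendsto_norm_cocompact_atTop.inv_tendsto_atTop
    refine this.congr fun z => ?_
    simp [norm_div, RCLike.norm_conj]
  have hne : ∀ᶠ z : ℂ in cocompact ℂ, z ≠ 0 := by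
    rw [eventually_iff]
    exact mem_cocompact.2 ⟨{0}, isCompact_singleton, by intro z hz; simpa using hz⟩
  have hlim : Tendsto F (cocompact ℂ)
      (𝓝 (-(starRingEnd ℂ) (H 0) - G 0 * 0)) := by
    have h1 : Tendsto (fun z : ℂ => -(starRingEnd ℂ) (H (-1 / (starRingEnd ℂ) z)))
        (cocompact ℂ) (𝓝 (-(starRingEnd ℂ) (H 0))) := by
      have := (hHd.continuous.tendsto 0).comp hinv
      exact ((continuous_conj.tendsto _).comp this).neg
    have h2 : Tendsto (fun z : ℂ => G 0 * z⁻¹) (cocompact ℂ) (𝓝 (G 0 * 0)) := by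
      apply Tendsto.const_mul
      rw [tendsto_zero_iff_norm_tendsto_zero]
      have : Tendsto (fun z : ℂ => ‖z‖⁻¹) (cocompact ℂ) (𝓝 0) :=
        tendsto_norm_cocompact_atTop.inv_tendsto_atTop
      refine this.congr fun z => ?_
      simp
    refine Tendsto.congr' ?_ (h1.sub h2)
    filter_upwards [hne] with z hz
    rw [key z hz, hsym z hz]
    have hcz : (starRingEnd ℂ) z ≠ 0 := by simpa using hz
    rw [hHe _ (div_ne_zero (by norm_num) hcz)]
  have hconst := hFd.eq_const_of_tendsto_cocompact hlim
  set c : ℂ := -(starRingEnd ℂ) (H 0) - G 0 * 0 with hc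
  have hFz : ∀ z : ℂ, F z = c := fun z => by rw [hconst]; rfl
  have hgf : ∀ z : ℂ, z ≠ 0 → g z = c + G 0 * z⁻¹ := by
    intro z hz
    have h3 := key z hz
    rw [hFz z] at h3
    linear_combination -h3
  refine ⟨c, G 0, hgf, ?_⟩
  intro w hw
  have hcw : (starRingEnd ℂ) w ≠ 0 := by simpa using hw
  set z : ℂ := -1 / (starRingEnd ℂ) w with hz
  have hzne : z ≠ 0 := by
    rw [hz]; exact div_ne_zero (by norm_num) hcw
  have hwz : -1 / (starRingEnd ℂ) z = w := by
    rw [hz]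
    rw [map_div₀, map_neg, map_one, Complex.conj_conj]
    field_simp
  have := hsym z hzne
  rw [hwz, hgf z hzne] at this
  have hzi : z⁻¹ = -(starRingEnd ℂ) w := by
    rw [hz]; field_simp
  rw [hzi] at this
  have h4 : (starRingEnd ℂ) (h w) = -(c + G 0 * -(starRingEnd ℂ) w) := by
    linear_combination this
  have h2 := congrArg (starRingEnd ℂ) h4
  rw [Complex.conj_conj] at h2
  rw [h2]
  simp only [map_neg, map_add, map_mul, Complex.conj_conj]
  ring
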